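/- Let N < p < q < ∞ and Ω ⊊ ℝ^N open. Setting γ = N/q + (p-N)/p, the Hardy constants satisfy the interpolation bound 𝔥_{p,q}(Ω) ≥ 𝔥_p(Ω)^{p/q} · 𝔥_{p,∞}(Ω)^{(q-p)/q}. -/

import Mathlib

open Set Metric MeasureTheory

/-- The sharp Hardy constant
`𝔥_{p,q}(Ω) = inf {∫_Ω |∇u|^p : u ∈ C_0^∞(Ω), ‖u/d_Ω^γ‖_{L^q(Ω)} = 1}`
with `γ = N/q + (p-N)/p`. -/
noncomputable def hardyPQ {N : ℕ} (p q : ℝ) (Ω : Set (EuclideanSpace ℝ (Fin N))) : ℝ :=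
  sInf {E : ℝ | ∃ u : EuclideanSpace ℝ (Fin N) → ℝ, ContDiff ℝ (⊤ : ℕ∞) u ∧
    HasCompactSupport u ∧ tsupport u ⊆ Ω ∧
    (∫ x in Ω, (|u x| / Metric.infDist x Ωᶜ ^ ((N : ℝ)/q + (p - N)/p)) ^ q) = 1 ∧
    E = ∫ x in Ω, ‖gradient u x‖ ^ p}

/-- The sharp Hardy constant `𝔥_p(Ω) = inf {∫_Ω |∇u|^p : u ∈ C_0^∞(Ω), ‖u/d_Ω‖_{L^p(Ω)} = 1}`. -/
noncomputable def hardyP {N : ℕ} (p : ℝ) (Ω : Set (EuclideanSpace ℝ (Fin N))) : ℝ :=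
  sInf {E : ℝ | ∃ u : EuclideanSpace ℝ (Fin N) → ℝ, ContDiff ℝ (⊤ : ℕ∞) u ∧
    HasCompactSupport u ∧ tsupport u ⊆ Ω ∧
    (∫ x in Ω, (|u x| / Metric.infDist x Ωᶜ) ^ p) = 1 ∧
    E = ∫ x in Ω, ‖gradient u x‖ ^ p}

/-- The sharp endpoint Hardy constant
`𝔥_{p,∞}(Ω) = inf {∫_Ω |∇u|^p : u ∈ C_0^∞(Ω), ‖u/d_Ω^{1-N/p}‖_{L^∞(Ω)} = 1}`. -/
noncomputable def hardyInfty {N : ℕ} (p : ℝ) (Ω : Set (EuclideanSpace ℝ (Fin N))) : ℝ :=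
  sInf {E : ℝ | ∃ u : EuclideanSpace ℝ (Fin N) → ℝ, ContDiff ℝ (⊤ : ℕ∞) u ∧
    HasCompactSupport u ∧ tsupport u ⊆ Ω ∧
    (⨆ x ∈ Ω, ENNReal.ofReal (|u x| / Metric.infDist x Ωᶜ ^ (1 - (N : ℝ)/p))) = 1 ∧
    E = ∫ x in Ω, ‖gradient u x‖ ^ p}

open scoped ENNReal

/-!
For an admissible `u` of `𝔥_{p,q}`, write `A = ∫_Ω |u/d|^p` and `M = sup_Ω |u|/d^{1-N/p}`.
The exponents satisfy `γ q = p + (1 - N/p)(q - p)`, so pointwise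
`|u/d^γ|^q = |u/d|^p · (|u|/d^{1-N/p})^{q-p} ≤ |u/d|^p M^{q-p}`, whence `1 ≤ A M^{q-p}`.
Rescaling `u` gives `𝔥_p ≤ ∫|∇u|^p / A` and `𝔥_{p,∞} ≤ ∫|∇u|^p / M^p`, and combining the two
with weights `p/q` and `(q-p)/q` yields `𝔥_p^{p/q} 𝔥_{p,∞}^{(q-p)/q} ≤ ∫|∇u|^p (A M^{q-p})^{-p/q}
≤ ∫|∇u|^p`.
-/

lemma Real.div_rpow_eq_mul_div_rpow {a d γ β p q : ℝ} (ha : 0 ≤ a) (hd : 0 < d) (hq : q ≠ 0)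
    (hexp : γ * q = p + β * (q - p)) :
    (a / d ^ γ) ^ q = (a / d) ^ p * (a / d ^ β) ^ (q - p) := by
  rw [Real.div_rpow ha (by positivity), Real.div_rpow ha hd.le,
    Real.div_rpow ha (by positivity), ← Real.rpow_mul hd.le, ← Real.rpow_mul hd.le, hexp,
    Real.rpow_add hd, div_mul_div_comm, ← Real.rpow_add' ha (by simpa using hq),
    add_sub_cancel]

lemma Real.rpow_mul_rpow_le_of_le_div {a b A B E θ : ℝ} (ha : 0 ≤ a) (hb : 0 ≤ b)
    (hA : 0 < A) (hB : 0 < B) (hE : 0 ≤ E) (hθ₀ : 0 ≤ θ) (hθ₁ : θ ≤ 1)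
    (haA : a ≤ E / A) (hbB : b ≤ E / B) (h : 1 ≤ A ^ θ * B ^ (1 - θ)) :
    a ^ θ * b ^ (1 - θ) ≤ E :=
  calc a ^ θ * b ^ (1 - θ) ≤ (E / A) ^ θ * (E / B) ^ (1 - θ) := by
        gcongr
    _ = E / (A ^ θ * B ^ (1 - θ)) := by
        rw [Real.div_rpow hE hA.le, Real.div_rpow hE hB.le, div_mul_div_comm,
          ← Real.rpow_add' hE (by simp), add_sub_cancel, Real.rpow_one]
    _ ≤ E := div_le_self hE h

lemma continuous_abs_div_infDist_rpow {X : Type*} [PseudoMetricSpace X] {u : X → ℝ}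
    {s : Set X} (hu : Continuous u) (hs : IsClosed s) (hs' : s.Nonempty)
    (hus : tsupport u ⊆ sᶜ) (γ : ℝ) :
    Continuous fun x => |u x| / infDist x s ^ γ := by
  refine continuous_iff_continuousAt.2 fun x => ?_
  by_cases hx : x ∈ tsupport u
  · have hd : 0 < infDist x s := (hs.notMem_iff_infDist_pos hs').1 (hus hx)
    have hdγ : ContinuousAt (fun y => infDist y s ^ γ) x :=
      (continuous_infDist_pt s).continuousAt.rpow_const (Or.inl hd.ne')
    exact hu.abs.continuousAt.div hdγ (Real.rpow_pos_of_pos hd γ).ne'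
  · refine (continuousAt_const (y := (0 : ℝ))).congr ?_
    filter_upwards [notMem_tsupport_iff_eventuallyEq.1 hx] with y hy
    simp [hy]

lemma HasCompactSupport.abs_div {X : Type*} [TopologicalSpace X] {u : X → ℝ}
    (hu : HasCompactSupport u) (w : X → ℝ) : HasCompactSupport fun x => |u x| / w x :=
  hu.mono fun x hx h0 => hx (by simp [h0])

lemma iSup₂_ofReal_ne_top {X : Type*} [TopologicalSpace X] {g : X → ℝ} (hg : Continuous g)
    (hgc : HasCompactSupport g) (s : Set X) : (⨆ x ∈ s, ENNReal.ofReal (g x)) ≠ ⊤ := by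
  obtain ⟨C, hC⟩ := hg.bddAbove_range_of_hasCompactSupport hgc
  exact ne_top_of_le_ne_top ENNReal.ofReal_ne_top
    (iSup₂_le fun x _ => ENNReal.ofReal_le_ofReal (hC (mem_range_self x)))

lemma integral_abs_const_mul_div_rpow {X : Type*} [MeasurableSpace X] {μ : Measure X}
    {u w : X → ℝ} (hw : ∀ x, 0 ≤ w x) {c : ℝ} (hc : 0 ≤ c) (q : ℝ) :
    ∫ x, (|c * u x| / w x) ^ q ∂μ = c ^ q * ∫ x, (|u x| / w x) ^ q ∂μ := by
  rw [← integral_const_mul]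
  congr 1 with x
  rw [abs_mul, abs_of_nonneg hc, mul_div_assoc,
    Real.mul_rpow hc (div_nonneg (abs_nonneg _) (hw x))]

section TestFunction

variable {F : Type*} [NormedAddCommGroup F] [NormedSpace ℝ F]

def IsTestFunction (Ω : Set F) (u : F → ℝ) : Prop :=
  ContDiff ℝ (⊤ : ℕ∞) u ∧ HasCompactSupport u ∧ tsupport u ⊆ Ω

lemma IsTestFunction.const_mul {Ω : Set F} {u : F → ℝ} (hu : IsTestFunction Ω u) (c : ℝ) :
    IsTestFunction Ω fun x => c * u x :=
  ⟨contDiff_const.mul hu.1, hu.2.1.mul_left, tsupport_mul_subset_right.trans hu.2.2⟩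

lemma exists_isTestFunction_ne_zero [FiniteDimensional ℝ F] {Ω : Set F} (hΩ : IsOpen Ω)
    {x₀ : F} (hx₀ : x₀ ∈ Ω) : ∃ u, IsTestFunction Ω u ∧ u x₀ ≠ 0 := by
  obtain ⟨u, hsupp, hcs, hu, -, hx⟩ :=
    exists_contDiff_tsupport_subset (n := ⊤) (hΩ.mem_nhds hx₀)
  exact ⟨u, ⟨hu, hcs, hsupp⟩, by simp [hx]⟩

end TestFunction

section Gradient

variable {F : Type*} [NormedAddCommGroup F] [InnerProductSpace ℝ F] [CompleteSpace F]

lemma gradient_const_mul {u : F → ℝ} {x : F} (hu : DifferentiableAt ℝ u x) (c : ℝ) :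
    gradient (fun y => c * u y) x = c • gradient u x := by
  rw [gradient, fderiv_const_mul hu, map_smul]
  rfl

lemma integral_norm_gradient_const_mul_rpow [MeasurableSpace F] {μ : Measure F} {u : F → ℝ}
    (hu : Differentiable ℝ u) {c : ℝ} (hc : 0 ≤ c) (p : ℝ) :
    ∫ x, ‖gradient (fun y => c * u y) x‖ ^ p ∂μ = c ^ p * ∫ x, ‖gradient u x‖ ^ p ∂μ := by
  rw [← integral_const_mul]
  congr 1 with x
  rw [gradient_const_mul (hu x), norm_smul, Real.norm_of_nonneg hc,
    Real.mul_rpow hc (norm_nonneg _)]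

end Gradient

section Hardy

variable {N : ℕ} {p q : ℝ} {Ω : Set (EuclideanSpace ℝ (Fin N))}
  {u : EuclideanSpace ℝ (Fin N) → ℝ}

lemma hardyP_nonneg : 0 ≤ hardyP p Ω :=
  Real.sInf_nonneg <| by
    rintro _ ⟨u, -, -, -, -, rfl⟩
    exact integral_nonneg fun _ => by positivity

lemma hardyInfty_nonneg : 0 ≤ hardyInfty p Ω :=
  Real.sInf_nonneg <| by
    rintro _ ⟨u, -, -, -, -, rfl⟩
    exact integral_nonneg fun _ => by positivity

lemma hardyPQ_nonneg : 0 ≤ hardyPQ p q Ω :=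
  Real.sInf_nonneg <| by
    rintro _ ⟨u, -, -, -, -, rfl⟩
    exact integral_nonneg fun _ => by positivity

-- For `Ω = univ` the weight is `infDist x ∅ = 0`, and `|u x| / 0 = 0` kills the normalisation.
lemma hardyP_eq_zero_of_eq_empty_or_eq_univ (hp : p ≠ 0) (hΩ : Ω = ∅ ∨ Ω = univ) :
    hardyP p Ω = 0 := by
  rw [hardyP, ← Real.sInf_empty]
  congr 1
  refine eq_empty_of_forall_notMem ?_
  rintro _ ⟨u, -, -, -, hu, -⟩
  rcases hΩ with rfl | rfl
  · simp at hu
  · simp [Real.zero_rpow hp] at hu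

lemma hardyP_le_div (hu : IsTestFunction Ω u) (hp : p ≠ 0)
    (hA : 0 < ∫ x in Ω, (|u x| / infDist x Ωᶜ) ^ p) :
    hardyP p Ω ≤ (∫ x in Ω, ‖gradient u x‖ ^ p) / ∫ x in Ω, (|u x| / infDist x Ωᶜ) ^ p := by
  set A := ∫ x in Ω, (|u x| / infDist x Ωᶜ) ^ p
  have hc : 0 ≤ A⁻¹ ^ p⁻¹ := by positivity
  have hcp : (A⁻¹ ^ p⁻¹) ^ p = A⁻¹ := Real.rpow_inv_rpow (inv_nonneg.2 hA.le) hp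
  obtain ⟨hcu, hcs, hsupp⟩ := hu.const_mul (A⁻¹ ^ p⁻¹)
  refine csInf_le ⟨0, ?_⟩ ⟨_, hcu, hcs, hsupp, ?_, ?_⟩
  · rintro _ ⟨u, -, -, -, -, rfl⟩
    exact integral_nonneg fun _ => by positivity
  · beta_reduce
    rw [integral_abs_const_mul_div_rpow (fun _ => infDist_nonneg) hc, hcp,
      inv_mul_cancel₀ hA.ne']
  · rw [integral_norm_gradient_const_mul_rpow (hu.1.differentiable (by simp)) hc, hcp,
      inv_mul_eq_div]

lemma hardyInfty_le_div (hu : IsTestFunction Ω u) {M : ℝ≥0∞}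
    (hM : (⨆ x ∈ Ω, ENNReal.ofReal (|u x| / infDist x Ωᶜ ^ (1 - (N : ℝ)/p))) = M)
    (h0 : M ≠ 0) (htop : M ≠ ⊤) :
    hardyInfty p Ω ≤ (∫ x in Ω, ‖gradient u x‖ ^ p) / M.toReal ^ p := by
  have hc : 0 ≤ M.toReal⁻¹ := by positivity
  obtain ⟨hcu, hcs, hsupp⟩ := hu.const_mul M.toReal⁻¹
  refine csInf_le ⟨0, ?_⟩ ⟨_, hcu, hcs, hsupp, ?_, ?_⟩
  · rintro _ ⟨u, -, -, -, -, rfl⟩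
    exact integral_nonneg fun _ => by positivity
  · simp_rw [abs_mul, abs_of_nonneg hc, mul_div_assoc, ENNReal.ofReal_mul hc,
      ← ENNReal.mul_iSup, hM]
    rw [ENNReal.ofReal_inv_of_pos (ENNReal.toReal_pos h0 htop), ENNReal.ofReal_toReal htop,
      ENNReal.inv_mul_cancel h0 htop]
  · rw [integral_norm_gradient_const_mul_rpow (hu.1.differentiable (by simp)) hc,
      Real.inv_rpow ENNReal.toReal_nonneg, inv_mul_eq_div]

lemma one_le_integral_mul_iSup_rpow (hu : IsTestFunction Ω u) (hΩ : IsOpen Ω)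
    (hc : Ωᶜ.Nonempty) (hp : 0 < p) (hpq : p < q)
    (hint : ∫ x in Ω, (|u x| / infDist x Ωᶜ ^ ((N : ℝ)/q + (p - N)/p)) ^ q = 1) :
    1 ≤ (∫ x in Ω, (|u x| / infDist x Ωᶜ) ^ p) *
      (⨆ x ∈ Ω, ENNReal.ofReal (|u x| / infDist x Ωᶜ ^ (1 - (N : ℝ)/p))).toReal ^ (q - p) := by
  have hq : 0 < q := hp.trans hpq
  have hg (γ : ℝ) : Continuous fun x => |u x| / infDist x Ωᶜ ^ γ :=
    continuous_abs_div_infDist_rpow hu.1.continuous hΩ.isClosed_compl hc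
      (by simpa using hu.2.2) γ
  have hg_int (γ : ℝ) {r : ℝ} (hr : 0 < r) :
      IntegrableOn (fun x => (|u x| / infDist x Ωᶜ ^ γ) ^ r) Ω :=
    ((hg γ).rpow_const fun _ => Or.inr hr.le).integrable_of_hasCompactSupport
      ((hu.2.1.abs_div _).comp_left (g := fun t : ℝ => t ^ r) (Real.zero_rpow hr.ne'))
      |>.integrableOn
  set M := ⨆ x ∈ Ω, ENNReal.ofReal (|u x| / infDist x Ωᶜ ^ (1 - (N : ℝ)/p))
  have hM : M ≠ ⊤ := iSup₂_ofReal_ne_top (hg _) (hu.2.1.abs_div _) Ω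
  have hle_M (x : EuclideanSpace ℝ (Fin N)) (hx : x ∈ Ω) :
      |u x| / infDist x Ωᶜ ^ (1 - (N : ℝ)/p) ≤ M.toReal :=
    (ENNReal.ofReal_le_iff_le_toReal hM).1
      (le_iSup₂ (f := fun x (_ : x ∈ Ω) => ENNReal.ofReal _) x hx)
  calc 1 = ∫ x in Ω, (|u x| / infDist x Ωᶜ ^ ((N : ℝ)/q + (p - N)/p)) ^ q := hint.symm
    _ ≤ ∫ x in Ω, (|u x| / infDist x Ωᶜ) ^ p * M.toReal ^ (q - p) := by
        refine setIntegral_mono_on (hg_int _ hq) ?_ hΩ.measurableSet fun x hx => ?_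
        · have h := (hg_int 1 hp).mul_const (M.toReal ^ (q - p))
          simp only [Real.rpow_one] at h
          exact h
        have hd : 0 < infDist x Ωᶜ :=
          (hΩ.isClosed_compl.notMem_iff_infDist_pos hc).1 (by simpa using hx)
        rw [Real.div_rpow_eq_mul_div_rpow (p := p) (β := 1 - N/p) (abs_nonneg _) hd hq.ne'
          (by field_simp; ring)]
        gcongr
        exact hle_M x hx
    _ = _ := integral_mul_const _ _

lemma hardyP_rpow_mul_hardyInfty_rpow_le (hu : IsTestFunction Ω u) (hΩ : IsOpen Ω)
    (hc : Ωᶜ.Nonempty) (hp : 0 < p) (hpq : p < q)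
    (hint : ∫ x in Ω, (|u x| / infDist x Ωᶜ ^ ((N : ℝ)/q + (p - N)/p)) ^ q = 1) :
    hardyP p Ω ^ (p/q) * hardyInfty p Ω ^ ((q - p)/q) ≤ ∫ x in Ω, ‖gradient u x‖ ^ p := by
  have hq : 0 < q := hp.trans hpq
  have h1 := one_le_integral_mul_iSup_rpow hu hΩ hc hp hpq hint
  set A := ∫ x in Ω, (|u x| / infDist x Ωᶜ) ^ p
  set M := ⨆ x ∈ Ω, ENNReal.ofReal (|u x| / infDist x Ωᶜ ^ (1 - (N : ℝ)/p))
  have hA : 0 < A := by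
    by_contra! h
    have hA₀ : 0 ≤ A :=
      integral_nonneg fun _ => Real.rpow_nonneg (div_nonneg (abs_nonneg _) infDist_nonneg) _
    rw [le_antisymm h hA₀, zero_mul] at h1
    linarith
  have hM : 0 < M.toReal := by
    by_contra! h
    rw [le_antisymm h ENNReal.toReal_nonneg, Real.zero_rpow (sub_pos.2 hpq).ne', mul_zero] at h1
    linarith
  have hAM : 1 ≤ A ^ (p/q) * (M.toReal ^ p) ^ (1 - p/q) := by
    have : A ^ (p/q) * (M.toReal ^ p) ^ (1 - p/q) = (A * M.toReal ^ (q - p)) ^ (p/q) := by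
      rw [Real.mul_rpow hA.le (by positivity), ← Real.rpow_mul hM.le, ← Real.rpow_mul hM.le]
      congr 2
      field_simp
    rw [this]
    exact Real.one_le_rpow h1 (by positivity)
  obtain ⟨hM₀, hM_top⟩ := ENNReal.toReal_pos_iff.1 hM
  rw [show (q - p)/q = 1 - p/q by field_simp]
  exact Real.rpow_mul_rpow_le_of_le_div hardyP_nonneg hardyInfty_nonneg hA (by positivity)
    (integral_nonneg fun _ => by positivity) (by positivity) (div_le_one_of_le₀ hpq.le hq.le)
    (hardyP_le_div hu hp.ne' hA) (hardyInfty_le_div hu rfl hM₀.ne' hM_top.ne) hAM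

lemma exists_isTestFunction_integral_eq_one (hΩ : IsOpen Ω) (hΩ' : Ω.Nonempty)
    (hc : Ωᶜ.Nonempty) (γ : ℝ) (hq : 0 < q) :
    ∃ u, IsTestFunction Ω u ∧ ∫ x in Ω, (|u x| / infDist x Ωᶜ ^ γ) ^ q = 1 := by
  obtain ⟨x₀, hx₀⟩ := hΩ'
  obtain ⟨u, hu, hux₀⟩ := exists_isTestFunction_ne_zero hΩ hx₀
  have hcont : Continuous fun x => (|u x| / infDist x Ωᶜ ^ γ) ^ q :=
    (continuous_abs_div_infDist_rpow hu.1.continuous hΩ.isClosed_compl hc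
      (by simpa using hu.2.2) γ).rpow_const fun _ => Or.inr hq.le
  have hd : 0 < infDist x₀ Ωᶜ :=
    (hΩ.isClosed_compl.notMem_iff_infDist_pos hc).1 (by simpa using hx₀)
  have hvanish (x) (hx : x ∉ Ω) : (|u x| / infDist x Ωᶜ ^ γ) ^ q = 0 := by
    rw [image_eq_zero_of_notMem_tsupport (fun h => hx (hu.2.2 h)), abs_zero, zero_div,
      Real.zero_rpow hq.ne']
  have hI : 0 < ∫ x in Ω, (|u x| / infDist x Ωᶜ ^ γ) ^ q := by
    rw [setIntegral_eq_integral_of_forall_compl_eq_zero hvanish]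
    refine hcont.integral_pos_of_hasCompactSupport_nonneg_nonzero
      ((hu.2.1.abs_div _).comp_left (g := fun t : ℝ => t ^ q) (Real.zero_rpow hq.ne'))
      (fun _ => Real.rpow_nonneg
        (div_nonneg (abs_nonneg _) (Real.rpow_nonneg infDist_nonneg γ)) q)
      (x := x₀) ?_
    exact (Real.rpow_pos_of_pos (div_pos (abs_pos.2 hux₀) (Real.rpow_pos_of_pos hd γ)) q).ne'
  set I := ∫ x in Ω, (|u x| / infDist x Ωᶜ ^ γ) ^ q
  have hc : 0 ≤ I⁻¹ ^ q⁻¹ := Real.rpow_nonneg (inv_nonneg.2 hI.le) _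
  refine ⟨_, hu.const_mul (I⁻¹ ^ q⁻¹), ?_⟩
  beta_reduce
  rw [integral_abs_const_mul_div_rpow (w := fun x => infDist x Ωᶜ ^ γ)
      (fun _ => Real.rpow_nonneg infDist_nonneg γ) hc,
    Real.rpow_inv_rpow (inv_nonneg.2 hI.le) hq.ne', inv_mul_cancel₀ hI.ne']

end Hardy

theorem hardy_interpolation_general {N : ℕ} (p q : ℝ) (hp : (N : ℝ) < p) (hpq : p < q)
    (Ω : Set (EuclideanSpace ℝ (Fin N))) (hΩ : IsOpen Ω) :
    hardyP p Ω ^ (p/q) * hardyInfty p Ω ^ ((q - p)/q) ≤ hardyPQ p q Ω := by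
  have hp₀ : 0 < p := (Nat.cast_nonneg N).trans_lt hp
  by_cases hdeg : Ω = ∅ ∨ Ω = univ
  · rw [hardyP_eq_zero_of_eq_empty_or_eq_univ hp₀.ne' hdeg,
      Real.zero_rpow (div_pos hp₀ (hp₀.trans hpq)).ne', zero_mul]
    exact hardyPQ_nonneg
  push Not at hdeg
  have hc : Ωᶜ.Nonempty := nonempty_compl.2 hdeg.2
  obtain ⟨u₀, hu₀, hint₀⟩ := exists_isTestFunction_integral_eq_one hΩ hdeg.1 hc _ (hp₀.trans hpq)
  refine le_csInf ⟨_, u₀, hu₀.1, hu₀.2.1, hu₀.2.2, hint₀, rfl⟩ ?_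
  rintro _ ⟨u, hu, hcs, hsupp, hint, rfl⟩
  exact hardyP_rpow_mul_hardyInfty_rpow_le ⟨hu, hcs, hsupp⟩ hΩ hc hp₀ hpq hint

/-- Interpolation bound between the Hardy constants: for `N < p < q < ∞` and `Ω ⊊ ℝ^N` open,
`𝔥_{p,q}(Ω) ≥ 𝔥_p(Ω)^{p/q} · 𝔥_{p,∞}(Ω)^{(q-p)/q}`. -/
theorem hardy_interpolation {N : ℕ} (hN : 0 < N) (p q : ℝ) (hp : (N : ℝ) < p) (hpq : p < q)
    (Ω : Set (EuclideanSpace ℝ (Fin N))) (hΩ : IsOpen Ω) (hne : Ω ≠ Set.univ) :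
    hardyP p Ω ^ (p/q) * hardyInfty p Ω ^ ((q - p)/q) ≤ hardyPQ p q Ω :=
  hardy_interpolation_general p q hp hpq Ω hΩ
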